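/- arXiv:2110.13844 — 2 statements merged into one kernel-verified Lean document; each statement's English description precedes it below -/
import Mathlib

section
/- Let N be a positive integer and m a nonzero integer. Let R = ℤ[T,T⁻¹] be the ring of Laurent polynomials over ℤ, let A be the 4×4 matrix over R whose diagonal entries all equal T^N − 1, whose entry in row 1 and column 4 equals −mT, and whose other entries are zero, let M be the cokernel of the R-linear map R⁴ → R⁴ given by multiplication by A, and for i ∈ ℤ let σ_i ∈ M denote the class of the vector (0,0,0,i). If i is a nonzero integer, then for every nonzero integer n one has n·(T^N − 1)·σ_i ≠ 0 in M. -/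
open LaurentPolynomial

noncomputable section

/-- The 4×4 matrix over ℤ[T,T⁻¹] with diagonal entries `T^N - 1`, entry `-m·T`
in row 1, column 4 (zero-indexed: row 0, column 3), and all other entries zero. -/
def Amat (N : ℕ) (m : ℤ) : Matrix (Fin 4) (Fin 4) (LaurentPolynomial ℤ) :=
  fun i j =>
    if i = j then T (N : ℤ) - 1
    else if i = 0 ∧ j = 3 then -(m : LaurentPolynomial ℤ) * T 1
    else 0

/-- The cokernel of the map `R⁴ → R⁴` given by multiplication by `Amat N m`. -/
def Coker (N : ℕ) (m : ℤ) :=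
  (Fin 4 → LaurentPolynomial ℤ) ⧸ LinearMap.range (Amat N m).mulVecLin

instance (N : ℕ) (m : ℤ) : AddCommGroup (Coker N m) :=
  Submodule.Quotient.addCommGroup _

instance (N : ℕ) (m : ℤ) : Module (LaurentPolynomial ℤ) (Coker N m) :=
  Submodule.Quotient.module _

/-- `σ_i`: the class of the vector `(0,0,0,i)` in the cokernel. -/
def sigma (N : ℕ) (m : ℤ) (i : ℤ) : Coker N m :=
  Submodule.Quotient.mk ![0, 0, 0, (i : LaurentPolynomial ℤ)]

/-! If `n (T^N - 1) σ_i = 0`, some `v` has `A v = (0, 0, 0, (T^N - 1) n i)`. Since `T^N - 1` is a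
nonzerodivisor, the last row gives `v₃ = n i`; the first row then reads `(T^N - 1) v₀ = m T n i`,
and evaluating at `T = 1` gives `m n i = 0`. -/

open Matrix

theorem LaurentPolynomial.T_sub_one_ne_zero {R : Type*} [CommRing R] [Nontrivial R] {n : ℤ}
    (hn : n ≠ 0) : (T n - 1 : R[T;T⁻¹]) ≠ 0 := by
  rw [sub_ne_zero, ← T_zero]
  intro h
  have h_coeff := congrArg (fun f : R[T;T⁻¹] => f.coeff n) h
  rw [T_apply, T_apply, if_pos rfl, if_neg hn.symm] at h_coeff
  exact one_ne_zero h_coeff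

theorem Amat_mulVec_zero (N : ℕ) (m : ℤ) (v : Fin 4 → ℤ[T;T⁻¹]) :
    (Amat N m *ᵥ v) 0 = (T N - 1) * v 0 - (m : ℤ[T;T⁻¹]) * T 1 * v 3 := by
  simp [Amat, mulVec, dotProduct, Fin.sum_univ_four]
  ring

theorem Amat_mulVec_three (N : ℕ) (m : ℤ) (v : Fin 4 → ℤ[T;T⁻¹]) :
    (Amat N m *ᵥ v) 3 = (T N - 1) * v 3 := by
  simp [Amat, mulVec, dotProduct]

theorem mul_eval₂_one_eq_zero_of_mem_range_Amat {N : ℕ} (hN : N ≠ 0) {m : ℤ} {r : ℤ[T;T⁻¹]}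
    (h : ![0, 0, 0, (T N - 1) * r] ∈ LinearMap.range (Amat N m).mulVecLin) :
    m * eval₂ (RingHom.id ℤ) 1 r = 0 := by
  obtain ⟨v, hv⟩ := h
  have hv3 : v 3 = r := by
    refine mul_left_cancel₀ (T_sub_one_ne_zero (Int.natCast_ne_zero.mpr hN)) ?_
    simpa [Amat_mulVec_three] using congrFun hv 3
  have h0 : (T N - 1) * v 0 - (m : ℤ[T;T⁻¹]) * T 1 * r = 0 := by
    simpa [Amat_mulVec_zero, hv3] using congrFun hv 0
  simpa using congrArg (eval₂ (RingHom.id ℤ) 1) h0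

theorem smul_sigma_eq_zero_iff (N : ℕ) (m i : ℤ) (r : ℤ[T;T⁻¹]) :
    r • sigma N m i = 0 ↔ ![0, 0, 0, r * i] ∈ LinearMap.range (Amat N m).mulVecLin := by
  change Submodule.Quotient.mk (r • ![0, 0, 0, (i : ℤ[T;T⁻¹])]) =
    (0 : (Fin 4 → ℤ[T;T⁻¹]) ⧸ LinearMap.range (Amat N m).mulVecLin) ↔ _
  simp [Submodule.Quotient.mk_eq_zero]

theorem stmt2 (N : ℕ) (hN : 0 < N) (m : ℤ) (hm : m ≠ 0) (i : ℤ) (hi : i ≠ 0) :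
    ∀ n : ℤ, n ≠ 0 → n • (((T (N : ℤ) - 1 : LaurentPolynomial ℤ)) • sigma N m i) ≠ 0 := by
  intro n hn h
  rw [← Int.cast_smul_eq_zsmul ℤ[T;T⁻¹], smul_smul, smul_sigma_eq_zero_iff,
    mul_comm (n : ℤ[T;T⁻¹]), mul_assoc] at h
  have h_eval : m * (n * i) = 0 := by
    simpa using mul_eval₂_one_eq_zero_of_mem_range_Amat hN.ne' h
  simp [hm, hn, hi] at h_eval
end
end

section
/- Let M be a module over the Laurent polynomial ring ℤ[T,T⁻¹], let σ ∈ M, and let N and k be positive integers. If (T^N − 1)²·σ = 0 and (T^k − 1)·σ = 0, then there exists a nonzero integer n such that n·(T^N − 1)·σ = 0. -/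
/-!
Over `ℚ`, the polynomial `Q = X^k - 1` is squarefree, so the generator `g` of the principal ideal
`(P², Q)` is squarefree as well; since `g ∣ P²`, already `g ∣ P`, i.e. `P ∈ (P², Q)` for
`P = X^N - 1`. Clearing denominators puts `n P` in the ideal `((X^N - 1)², X^k - 1)` of `ℤ[X]` for
some integer `n ≠ 0`, and this ideal annihilates `σ` once `X` acts as `T`.
-/

open Polynomial

theorem mem_span_sq_pair_of_squarefree {R : Type*} [CommRing R] [IsDomain R]
    [IsPrincipalIdealRing R] {P Q : R} (hQ : Squarefree Q) : P ∈ Ideal.span {P ^ 2, Q} := by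
  obtain ⟨g, hg⟩ : ∃ g, Ideal.span {P ^ 2, Q} = Ideal.span {g} :=
    Submodule.IsPrincipal.principal _
  have hdvd : ∀ x ∈ ({P ^ 2, Q} : Set R), g ∣ x := fun x hx ↦
    Ideal.mem_span_singleton.1 <| hg ▸ Ideal.subset_span hx
  rw [hg, Ideal.mem_span_singleton]
  exact (hQ.squarefree_of_dvd (hdvd Q (by simp))).isRadical 2 P (hdvd _ (by simp))

namespace Polynomial

attribute [local instance] Polynomial.algebra Polynomial.isLocalization in
theorem exists_C_mul_mem_of_map_mem {R K : Type*} [CommRing R] [CommRing K] [Algebra R K]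
    [IsFractionRing R K] {I : Ideal R[X]} {f : R[X]}
    (hf : f.map (algebraMap R K) ∈ I.map (mapRingHom (algebraMap R K))) :
    ∃ r ∈ nonZeroDivisors R, C r * f ∈ I := by
  obtain ⟨⟨⟨g, hg⟩, ⟨_, r, hr, rfl⟩⟩, h⟩ :=
    (IsLocalization.mem_map_algebraMap_iff ((nonZeroDivisors R).map C) K[X]).1 hf
  have hinj : Function.Injective (map (algebraMap R K)) :=
    map_injective _ (IsFractionRing.injective R K)
  have hrf : C r * f = g := hinj (by simpa [mul_comm] using h)
  exact ⟨r, hr, hrf ▸ hg⟩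

theorem exists_C_mul_mem_span_sq_pair {R K : Type*} [CommRing R] [IsDomain R] [Field K]
    [Algebra R K] [IsFractionRing R K] {P Q : R[X]}
    (hQ : Squarefree (Q.map (algebraMap R K))) :
    ∃ r : R, r ≠ 0 ∧ C r * P ∈ Ideal.span {P ^ 2, Q} := by
  have hP := mem_span_sq_pair_of_squarefree (P := P.map (algebraMap R K)) hQ
  rw [← Polynomial.map_pow, ← coe_mapRingHom, ← Set.image_pair, ← Ideal.map_span] at hP
  obtain ⟨r, hr, hmem⟩ := exists_C_mul_mem_of_map_mem hP
  exact ⟨r, nonZeroDivisors.coe_ne_zero ⟨r, hr⟩, hmem⟩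

theorem squarefree_X_pow_sub_one {K : Type*} [Field K] [CharZero K] {k : ℕ} (hk : 0 < k) :
    Squarefree (X ^ k - 1 : K[X]) := by
  simpa using (separable_X_pow_sub_C (1 : K) (Nat.cast_ne_zero.2 hk.ne') one_ne_zero).squarefree

end Polynomial

open LaurentPolynomial

theorem stmt8_general (M : Type*) [AddCommGroup M] [Module (LaurentPolynomial ℤ) M]
    (σ : M) (N k : ℕ) (hk : 0 < k)
    (h1 : ((T (N : ℤ) - 1 : LaurentPolynomial ℤ)) ^ 2 • σ = 0)
    (h2 : ((T (k : ℤ) - 1 : LaurentPolynomial ℤ)) • σ = 0) :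
    ∃ n : ℤ, n ≠ 0 ∧ n • (((T (N : ℤ) - 1 : LaurentPolynomial ℤ)) • σ) = 0 := by
  obtain ⟨n, hn, hmem⟩ := exists_C_mul_mem_span_sq_pair (K := ℚ)
    (P := (X ^ N - 1 : ℤ[X])) (Q := X ^ k - 1) (by simpa using squarefree_X_pow_sub_one hk)
  let J := (Ideal.torsionOf ℤ[T;T⁻¹] M σ).comap (toLaurent : ℤ[X] →+* ℤ[T;T⁻¹])
  have hspan : Ideal.span {(X ^ N - 1 : ℤ[X]) ^ 2, X ^ k - 1} ≤ J := by
    simp [J, Ideal.span_le, Set.insert_subset_iff, h1, h2]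
  refine ⟨n, hn, ?_⟩
  simpa [J, Ideal.mem_torsionOf_iff, mul_smul, Int.cast_smul_eq_zsmul] using hspan hmem

theorem stmt8 (M : Type*) [AddCommGroup M] [Module (LaurentPolynomial ℤ) M]
    (σ : M) (N k : ℕ) (hN : 0 < N) (hk : 0 < k)
    (h1 : ((T (N : ℤ) - 1 : LaurentPolynomial ℤ)) ^ 2 • σ = 0)
    (h2 : ((T (k : ℤ) - 1 : LaurentPolynomial ℤ)) • σ = 0) :
    ∃ n : ℤ, n ≠ 0 ∧ n • (((T (N : ℤ) - 1 : LaurentPolynomial ℤ)) • σ) = 0 :=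
  stmt8_general M σ N k hk h1 h2
end
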